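/- arXiv:2401.08869 — 2 statements merged into one kernel-verified Lean document; each statement's English description precedes it below -/
import Mathlib

section
/- For every word u on X^{±1}, the elements qu and q are conjugate in the Miller Machine M(G) if and only if u represents the identity of G. -/
/-!
Common setup: a finitely presented group `G = ⟨X ∣ R⟩` (`X` a finite set, `R` a finite
nonempty set of words of the free group `F(X)`) and its Miller machine `M(G)`,
the group generated by `X ∪ Θ ∪ {q}`, where `Θ = {θ_α : α ∈ X ∪ R}`, subject to
the relations `θ_α x = x θ_α` (`x ∈ X`, `α ∈ X ∪ R`), `θ_x x q = q x θ_x` (`x ∈ X`)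
and `θ_r q = q r θ_r` (`r ∈ R`).
-/

namespace Miller

noncomputable section

/-- Index type for the letters `Θ`: one letter `θ_α` for each `α ∈ X ∪ R`
(since `X ∩ R = ∅`, the disjoint sum is faithful). -/
abbrev ThIdx (X : Type) (R : Finset (FreeGroup X)) : Type := X ⊕ {r : FreeGroup X // r ∈ R}

/-- The generators of the Miller machine: the letters of `X`, the letters `Θ`, and `q`. -/
abbrev Gen (X : Type) (R : Finset (FreeGroup X)) : Type := X ⊕ (ThIdx X R ⊕ Unit)

variable (X : Type) (R : Finset (FreeGroup X))

/-- The letter `x ∈ X`, as a word on the generators of `M(G)`. -/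
def xg (x : X) : FreeGroup (Gen X R) := FreeGroup.of (Sum.inl x)

/-- The letter `θ_α`, as a word on the generators of `M(G)`. -/
def θg (a : ThIdx X R) : FreeGroup (Gen X R) := FreeGroup.of (Sum.inr (Sum.inl a))

/-- The letter `q`, as a word on the generators of `M(G)`. -/
def qg : FreeGroup (Gen X R) := FreeGroup.of (Sum.inr (Sum.inr ()))

/-- A word on `X` is in particular a word on the generators of `M(G)`. -/
def ofX : FreeGroup X →* FreeGroup (Gen X R) := FreeGroup.map Sum.inl

/-- The defining relators of the Miller machine `M(G)`. -/
def rels : Set (FreeGroup (Gen X R)) :=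
  {w | (∃ (a : ThIdx X R) (x : X),
          w = θg X R a * xg X R x * (xg X R x * θg X R a)⁻¹) ∨
       (∃ x : X,
          w = θg X R (Sum.inl x) * xg X R x * qg X R *
              (qg X R * xg X R x * θg X R (Sum.inl x))⁻¹) ∨
       (∃ r : {r : FreeGroup X // r ∈ R},
          w = θg X R (Sum.inr r) * qg X R *
              (qg X R * ofX X R r.1 * θg X R (Sum.inr r))⁻¹)}

/-- The group `G = ⟨X ∣ R⟩`. -/
abbrev G := PresentedGroup (R : Set (FreeGroup X))

/-- The Miller machine `M(G)`. -/
abbrev M := PresentedGroup (rels X R)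

/-- The element of `G` represented by a word on `X`. -/
def toG : FreeGroup X →* G X R := PresentedGroup.mk _

/-- The element of `M(G)` represented by a word on the generators. -/
def toM : FreeGroup (Gen X R) →* M X R := PresentedGroup.mk _

/-- The element of `M(G)` represented by a word on `X`. -/
def embX : FreeGroup X →* M X R := (toM X R).comp (ofX X R)

/-- The element of `M(G)` represented by a word on `Θ`. -/
def embTh : FreeGroup (ThIdx X R) →* M X R :=
  (toM X R).comp (FreeGroup.map fun a => Sum.inr (Sum.inl a))

/-- The generator `x ∈ X` as element of `M(G)`. -/
def xM (x : X) : M X R := toM X R (xg X R x)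

/-- The generator `θ_α` as element of `M(G)`. -/
def θM (a : ThIdx X R) : M X R := toM X R (θg X R a)

/-- The generator `q` as element of `M(G)`. -/
def qM : M X R := toM X R (qg X R)

/-- The subgroup `⟨X, q⟩` of `M(G)`. -/
def XqSub : Subgroup (M X R) := Subgroup.closure (Set.range (xM X R) ∪ {qM X R})

/-- The subgroup `⟨Θ⟩` of `M(G)`. -/
def ThSub : Subgroup (M X R) := Subgroup.closure (Set.range (θM X R))

/-- The subgroup `H = ⟨X ∪ Θ⟩` of `M(G)`. -/
def Hgrp : Subgroup (M X R) := Subgroup.closure (Set.range (xM X R) ∪ Set.range (θM X R))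

/-- The subgroup `K₋₁ = ⟨{θ_x x : x ∈ X} ∪ {θ_r : r ∈ R}⟩` of `M(G)`. -/
def Kneg : Subgroup (M X R) := Subgroup.closure
  ((Set.range fun x : X => θM X R (Sum.inl x) * xM X R x) ∪
   (Set.range fun r : {r : FreeGroup X // r ∈ R} => θM X R (Sum.inr r)))

/-- The subgroup `K₁ = ⟨{θ_x x : x ∈ X} ∪ {θ_r r : r ∈ R}⟩` of `M(G)`. -/
def Kpos : Subgroup (M X R) := Subgroup.closure
  ((Set.range fun x : X => θM X R (Sum.inl x) * xM X R x) ∪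
   (Set.range fun r : {r : FreeGroup X // r ∈ R} => θM X R (Sum.inr r) * embX X R r.1))

/-- `‖g‖`: the (reduced) word length of an element of a free group. -/
def wlen {β : Type} (g : FreeGroup β) : ℕ :=
  sInf {n | ∃ l : List (β × Bool), FreeGroup.mk l = g ∧ l.length = n}

/-- `|g|`: word length in `M(G)` with respect to the generating set `X ∪ Θ ∪ {q}`. -/
def mlen (g : M X R) : ℕ :=
  sInf {n | ∃ w : FreeGroup (Gen X R), toM X R w = g ∧ wlen w = n}

/-- `c(u,v)`: the minimal length of a conjugator taking `u` to `v` in `M(G)`. -/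
def c (u v : M X R) : ℕ :=
  sInf {n | ∃ γ : M X R, γ * u * γ⁻¹ = v ∧ mlen X R γ = n}

/-- `c'(u,v)`: the minimal length of a conjugator in `⟨X ∪ Θ⟩` taking `u` to `v`. -/
def c' (u v : M X R) : ℕ :=
  sInf {n | ∃ γ ∈ Hgrp X R, γ * u * γ⁻¹ = v ∧ mlen X R γ = n}

/-- The product `∏_{i<m} w_i r_i w_i⁻¹`. -/
def prodConj (m : ℕ) (w r : ℕ → FreeGroup X) : FreeGroup X :=
  ((List.range m).map fun i => w i * r i * (w i)⁻¹).prod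

/-- `r_0, …, r_{m-1} ∈ R^{±1}`. -/
def IsRelSeq (m : ℕ) (r : ℕ → FreeGroup X) : Prop := ∀ i < m, r i ∈ R ∨ (r i)⁻¹ ∈ R

/-- `δ(g)`: the least `m` such that `g` is freely equal to a product of `m`
conjugates of elements of `R^{±1}`. -/
def area (g : FreeGroup X) : ℕ :=
  sInf {m | ∃ w r : ℕ → FreeGroup X, IsRelSeq X R m r ∧ g = prodConj X m w r}

/-- The Dehn function `Δ` of the presentation `⟨X ∣ R⟩`. -/
def Dehn (n : ℕ) : ℕ :=
  sSup {d | ∃ g : FreeGroup X, wlen g ≤ n ∧ toG X R g = 1 ∧ area X R g = d}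

/-- `f(w) = m + ‖w₁‖ + ‖w_m‖ + ∑_{i=1}^{m-1} ‖w_i⁻¹ w_{i+1}‖` (with `0`-based indexing). -/
def fval (m : ℕ) (w : ℕ → FreeGroup X) : ℕ :=
  m + wlen (w 0) + wlen (w (m - 1)) + ∑ i ∈ Finset.range (m - 1), wlen ((w i)⁻¹ * w (i + 1))

/-- `λ(g)`: the minimum of `f(w)` over expressions `w = ∏ w_i r_i w_i⁻¹` freely equal to `g`. -/
def lam (g : FreeGroup X) : ℕ :=
  sInf {n | ∃ (m : ℕ) (w r : ℕ → FreeGroup X),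
    1 ≤ m ∧ IsRelSeq X R m r ∧ g = prodConj X m w r ∧ fval X m w = n}

/-- `Λ(n)`: the maximum of `λ(g)` over words `g` with `g =_G 1` and `‖g‖ ≤ n`. -/
def Lam (n : ℕ) : ℕ :=
  sSup {d | ∃ g : FreeGroup X, wlen g ≤ n ∧ toG X R g = 1 ∧ lam X R g = d}

/-- `t = max({‖r‖ : r ∈ R} ∪ {2})`. -/
def t : ℕ := max (R.sup fun r => wlen r) 2

/-- `w, ε` witness the iso-computational list conjugacy `u ∼^σ v` (indices `0,…,k-1`,
with the convention that the index after `k-1` is `0`, i.e. `σ_{k+1} = σ₁`). -/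
def IsICLCWitness (k : ℕ) (σ : ℕ → ℤ) (u v : ℕ → FreeGroup X) (w ε : FreeGroup X) : Prop :=
  toG X R ε = 1 ∧ ∀ i < k,
    (σ i = 1 ∧ σ ((i + 1) % k) = 1 → w * ε * u i * w⁻¹ = v i) ∧
    (σ i = 1 ∧ σ ((i + 1) % k) = -1 → w * ε * u i * ε⁻¹ * w⁻¹ = v i) ∧
    (σ i = -1 ∧ σ ((i + 1) % k) = 1 → w * u i * w⁻¹ = v i) ∧
    (σ i = -1 ∧ σ ((i + 1) % k) = -1 → w * u i * ε⁻¹ * w⁻¹ = v i)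

/-- Iso-computational list conjugacy `u ∼^σ v`. -/
def ICLC (k : ℕ) (σ : ℕ → ℤ) (u v : ℕ → FreeGroup X) : Prop :=
  ∃ w ε : FreeGroup X, IsICLCWitness X R k σ u v w ε

/-- `c_{k,σ}(u,v)`: the least `‖w‖` over witnessing pairs `(w, ε)` for `u ∼^σ v`. -/
def cList (k : ℕ) (σ : ℕ → ℤ) (u v : ℕ → FreeGroup X) : ℕ :=
  sInf {n | ∃ w ε : FreeGroup X, IsICLCWitness X R k σ u v w ε ∧ wlen w = n}

/-- `C_{k,σ}(n)`. -/
def CC (k : ℕ) (σ : ℕ → ℤ) (n : ℕ) : ℕ :=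
  sSup {d | ∃ u v : ℕ → FreeGroup X, ICLC X R k σ u v ∧
    (∑ i ∈ Finset.range k, (wlen (u i) + wlen (v i))) ≤ n - 2 * k ∧
    cList X R k σ u v = d}

/-- The alphabet `X ∪ {q}`. -/
abbrev Yt (X : Type) : Type := X ⊕ Unit

/-- The letter `q` in the free group `F(X ∪ {q})`. -/
def qY : FreeGroup (Yt X) := FreeGroup.of (Sum.inr ())

/-- A word on `X` as a word on `X ∪ {q}`. -/
def embY : FreeGroup X →* FreeGroup (Yt X) := FreeGroup.map Sum.inl

/-- The element of `M(G)` represented by a word on `X ∪ {q}`. -/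
def toMY : FreeGroup (Yt X) →* M X R :=
  (toM X R).comp (FreeGroup.map (Sum.elim Sum.inl fun u => Sum.inr (Sum.inr u)))

/-- The word `q^{σ₁}u₁q^{σ₂}u₂⋯q^{σ_k}u_k` on `X ∪ {q}` (`0`-based indexing). -/
def qword (k : ℕ) (σ : ℕ → ℤ) (u : ℕ → FreeGroup X) : FreeGroup (Yt X) :=
  ((List.range k).map fun i => qY X ^ σ i * embY X (u i)).prod

/-- The word `q^{σ₁}u₁q^{σ₂}u₂⋯q^{σ_k}u_k` is (freely) reduced, expressed as:
its reduced length equals the sum of the lengths of its letters. -/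
def ReducedForm (k : ℕ) (σ : ℕ → ℤ) (u : ℕ → FreeGroup X) : Prop :=
  wlen (qword X k σ u) = k + ∑ i ∈ Finset.range k, wlen (u i)

/-- The element `q^{σ₁}u₁q^{σ₂}u₂⋯q^{σ_k}u_k` of `M(G)`. -/
def qwordM (k : ℕ) (σ : ℕ → ℤ) (u : ℕ → FreeGroup X) : M X R :=
  toMY X R (qword X k σ u)

/-- `σ` is a tuple of signs `±1`. -/
def IsSgn (k : ℕ) (σ : ℕ → ℤ) : Prop := ∀ i < k, σ i = 1 ∨ σ i = -1

/-- `D_{k,σ}(n)`: restriction of the conjugator length function of `M(G)` to conjugate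
pairs `x = q^{σ₁}u₁⋯q^{σ_k}u_k`, `y = q^{σ₁}v₁⋯q^{σ_k}v_k` that are reduced words with
`∑ (‖u_i‖ + ‖v_i‖) ≤ n - 2k`. -/
def Dk (k : ℕ) (σ : ℕ → ℤ) (n : ℕ) : ℕ :=
  sSup {d | ∃ u v : ℕ → FreeGroup X,
    ReducedForm X k σ u ∧ ReducedForm X k σ v ∧
    IsConj (qwordM X R k σ u) (qwordM X R k σ v) ∧
    (∑ i ∈ Finset.range k, (wlen (u i) + wlen (v i))) ≤ n - 2 * k ∧
    c X R (qwordM X R k σ u) (qwordM X R k σ v) = d}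

/-- `D'_{k,σ}(n)`: as `D_{k,σ}(n)`, but for pairs conjugate via an element of `⟨X ∪ Θ⟩`
and with minimal conjugator length measured over conjugators in `⟨X ∪ Θ⟩`. -/
def Dk' (k : ℕ) (σ : ℕ → ℤ) (n : ℕ) : ℕ :=
  sSup {d | ∃ u v : ℕ → FreeGroup X,
    ReducedForm X k σ u ∧ ReducedForm X k σ v ∧
    (∃ γ ∈ Hgrp X R, γ * qwordM X R k σ u * γ⁻¹ = qwordM X R k σ v) ∧
    (∑ i ∈ Finset.range k, (wlen (u i) + wlen (v i))) ≤ n - 2 * k ∧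
    c' X R (qwordM X R k σ u) (qwordM X R k σ v) = d}

/-- `D₀(n)`: restriction of the conjugator length function of `M(G)` to pairs
`(qu, q)` with `u` a word on `X`, `qu` conjugate to `q`, and `‖u‖ ≤ n - 2`. -/
def D0 (n : ℕ) : ℕ :=
  sSup {d | ∃ u : FreeGroup X, wlen u ≤ n - 2 ∧
    IsConj (qM X R * embX X R u) (qM X R) ∧ c X R (qM X R * embX X R u) (qM X R) = d}

/-- `D'₀(n)`: as `D₀(n)`, via conjugators in `⟨X ∪ Θ⟩`. -/
def D0' (n : ℕ) : ℕ :=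
  sSup {d | ∃ u : FreeGroup X, wlen u ≤ n - 2 ∧
    (∃ γ ∈ Hgrp X R, γ * (qM X R * embX X R u) * γ⁻¹ = qM X R) ∧
    c' X R (qM X R * embX X R u) (qM X R) = d}

/-- The endomorphism `φ_α` of `F(X ∪ {q})`: it fixes each `x ∈ X` and sends `q` to
`α⁻¹qα` if `α ∈ X` and to `qα` if `α ∈ R`. -/
def phi (a : ThIdx X R) : FreeGroup (Yt X) →* FreeGroup (Yt X) :=
  FreeGroup.lift fun s =>
    match s with
    | Sum.inl x => FreeGroup.of (Sum.inl x : Yt X)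
    | Sum.inr _ =>
      match a with
      | Sum.inl x' => (FreeGroup.of (Sum.inl x' : Yt X))⁻¹ * qY X * FreeGroup.of (Sum.inl x')
      | Sum.inr r => qY X * embY X r.1

end

end Miller

/-!
If `q u` is conjugate to `q`, then `u` is trivial in `G`: killing `Θ` and `q` maps `M(G)` onto
`G`, sending `q u ↦ u` and `q ↦ 1`.

Conversely, call `u ∈ F(X)` a *shift* if some `g` commuting with every word on `X` satisfies
`g q g⁻¹ = q u`; then `q u` and `q` are conjugate. Shifts form a subgroup containing every
`r ∈ R` (take `g = θ_r`). It is normal because `θ_w := ∏ θ_{x_i}` (for `w = ∏ x_i`) commutes with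
the words on `X` while `θ_w w` commutes with `q`, so `θ_w g θ_w⁻¹` shifts `q` by `w u w⁻¹`.
Hence every `u ∈ ⟨⟨R⟩⟩` is a shift.
-/

section ConjShift

variable {F M : Type*} [Group F] [Group M] (e : F →* M) (q : M)

def conjShift : Subgroup F where
  carrier := {u | ∃ g : M, (∀ v, Commute g (e v)) ∧ g * q * g⁻¹ = q * e u}
  one_mem' := ⟨1, fun _ => Commute.one_left _, by simp⟩
  mul_mem' := by
    rintro u v ⟨g, hg, hgq⟩ ⟨k, hk, hkq⟩
    refine ⟨g * k, fun w => (hg w).mul_left (hk w), ?_⟩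
    calc g * k * q * (g * k)⁻¹ = g * (k * q * k⁻¹) * g⁻¹ := by group
      _ = (g * q * g⁻¹) * (g * e v * g⁻¹) := by rw [hkq]; group
      _ = q * e (u * v) := by rw [hgq, (hg v).mul_inv_cancel, map_mul, mul_assoc]
  inv_mem' := by
    rintro u ⟨g, hg, hgq⟩
    refine ⟨g⁻¹, fun w => (hg w).inv_left, ?_⟩
    calc g⁻¹ * q * g⁻¹⁻¹ = g⁻¹ * q * (g * e u) * (e u)⁻¹ := by group
      _ = g⁻¹ * (g * q * g⁻¹) * g * (e u)⁻¹ := by rw [(hg u).eq, hgq]; group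
      _ = q * e u⁻¹ := by rw [map_inv]; group

variable {e q}

theorem isConj_mul_of_mem_conjShift {u : F} (hu : u ∈ conjShift e q) : IsConj (q * e u) q := by
  obtain ⟨g, -, hgq⟩ := hu
  exact isConj_iff.2 ⟨g⁻¹, by rw [← hgq]; group⟩

theorem conjShift_normal (θ : F →* M) (hθe : ∀ n v, Commute (θ n) (e v))
    (hθq : ∀ n, Commute (θ n * e n) q) : (conjShift e q).Normal := by
  refine ⟨fun u ⟨g, hg, hgq⟩ n => ⟨θ n * g * (θ n)⁻¹, fun v => ?_, ?_⟩⟩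
  · exact ((hθe n v).mul_left (hg v)).mul_left (hθe n v).inv_left
  have hq : (θ n)⁻¹ * q * θ n = e n * q * (e n)⁻¹ := by
    calc (θ n)⁻¹ * q * θ n = (θ n)⁻¹ * (θ n * e n * q * (θ n * e n)⁻¹) * θ n := by
          rw [(hθq n).mul_inv_cancel]
      _ = e n * q * (e n)⁻¹ := by group
  calc θ n * g * (θ n)⁻¹ * q * (θ n * g * (θ n)⁻¹)⁻¹
      = θ n * g * ((θ n)⁻¹ * q * θ n) * g⁻¹ * (θ n)⁻¹ := by group
    _ = θ n * (g * e n) * q * (g * e n)⁻¹ * (θ n)⁻¹ := by rw [hq]; group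
    _ = θ n * e n * (g * q * g⁻¹) * (θ n * e n)⁻¹ := by rw [(hg n).eq]; group
    _ = q * (θ n * e (n * u * n⁻¹) * (θ n)⁻¹) := by
        rw [hgq, ← mul_assoc, ← mul_assoc, (hθq n).eq, map_mul, map_mul, map_inv]; group
    _ = q * e (n * u * n⁻¹) := by rw [(hθe n _).mul_inv_cancel]

end ConjShift

namespace Miller

variable {X : Type} {R : Finset (FreeGroup X)}

theorem toM_eq_of_mul_inv_mem_rels {a b : FreeGroup (Gen X R)} (h : a * b⁻¹ ∈ rels X R) :
    toM X R a = toM X R b :=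
  mul_inv_eq_one.1 <| by rw [← map_inv, ← map_mul]; exact PresentedGroup.one_of_mem h

theorem commute_θM_xM (a : ThIdx X R) (x : X) : Commute (θM X R a) (xM X R x) := by
  have h := toM_eq_of_mul_inv_mem_rels (R := R) (Or.inl ⟨a, x, rfl⟩)
  simp only [map_mul] at h
  exact h

theorem θM_xM_mul_qM (x : X) :
    θM X R (.inl x) * xM X R x * qM X R = qM X R * xM X R x * θM X R (.inl x) := by
  have h := toM_eq_of_mul_inv_mem_rels (R := R) (Or.inr (Or.inl ⟨x, rfl⟩))
  simp only [map_mul] at h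
  exact h

theorem θM_mul_qM (r : {r : FreeGroup X // r ∈ R}) :
    θM X R (.inr r) * qM X R = qM X R * embX X R r.1 * θM X R (.inr r) := by
  have h := toM_eq_of_mul_inv_mem_rels (R := R) (Or.inr (Or.inr ⟨r, rfl⟩))
  simp only [map_mul] at h
  exact h

theorem commute_θM_embX (a : ThIdx X R) (v : FreeGroup X) : Commute (θM X R a) (embX X R v) := by
  induction v using FreeGroup.induction_on with
  | C1 => rw [map_one]; exact Commute.one_right _
  | of x => exact commute_θM_xM a x
  | inv_of x h => rw [map_inv]; exact h.inv_right
  | mul x y hx hy => rw [map_mul]; exact hx.mul_right hy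

variable (X R) in
def θWord : FreeGroup X →* M X R := FreeGroup.lift fun x => θM X R (.inl x)

theorem commute_θWord_embX (w v : FreeGroup X) : Commute (θWord X R w) (embX X R v) := by
  induction w using FreeGroup.induction_on with
  | C1 => rw [map_one]; exact Commute.one_left _
  | of x => exact commute_θM_embX (.inl x) v
  | inv_of x h => rw [map_inv]; exact h.inv_left
  | mul x y hx hy => rw [map_mul]; exact hx.mul_left hy

theorem commute_θWord_mul_embX_qM (w : FreeGroup X) :
    Commute (θWord X R w * embX X R w) (qM X R) := by
  induction w using FreeGroup.induction_on with
  | C1 => simp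
  | of x =>
      change Commute (θM X R (.inl x) * xM X R x) (qM X R)
      rw [Commute, SemiconjBy, θM_xM_mul_qM, mul_assoc, (commute_θM_xM _ x).eq, ← mul_assoc]
  | inv_of x h =>
      rw [map_inv, map_inv, ← mul_inv_rev, ← (commute_θWord_embX _ _).eq]
      exact h.inv_left
  | mul x y hx hy =>
      rw [map_mul, map_mul, mul_assoc, ← mul_assoc (θWord X R y), (commute_θWord_embX y x).eq]
      simpa only [mul_assoc] using hx.mul_left hy

theorem mem_conjShift_of_mem {r : FreeGroup X} (hr : r ∈ R) : r ∈ conjShift (embX X R) (qM X R) :=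
  ⟨θM X R (.inr ⟨r, hr⟩), commute_θM_embX _, by rw [θM_mul_qM]; group⟩

theorem normalClosure_le_conjShift :
    Subgroup.normalClosure (R : Set (FreeGroup X)) ≤ conjShift (embX X R) (qM X R) :=
  have := conjShift_normal (θWord X R) commute_θWord_embX commute_θWord_mul_embX_qM
  Subgroup.normalClosure_le_normal fun _ => mem_conjShift_of_mem

variable (X R) in
def killθqGen : Gen X R → G X R := Sum.elim (fun x => toG X R (.of x)) 1

theorem lift_killθqGen_ofX (u : FreeGroup X) :
    FreeGroup.lift (killθqGen X R) (ofX X R u) = toG X R u :=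
  DFunLike.congr_fun (FreeGroup.ext_hom (f := (FreeGroup.lift (killθqGen X R)).comp (ofX X R))
    (g := toG X R) fun _ => by simp [ofX, killθqGen]) u

variable (X R) in
def killθq : M X R →* G X R :=
  PresentedGroup.toGroup (f := killθqGen X R) <| by
    rintro w (⟨a, x, rfl⟩ | ⟨x, rfl⟩ | ⟨r, rfl⟩)
    · simp [θg, xg, killθqGen]
    · simp [θg, xg, qg, killθqGen]
    · have hr := (lift_killθqGen_ofX r.1).trans (PresentedGroup.one_of_mem r.2)
      simpa [θg, qg, killθqGen] using hr

theorem killθq_embX (u : FreeGroup X) : killθq X R (embX X R u) = toG X R u :=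
  lift_killθqGen_ofX u

theorem killθq_qM : killθq X R (qM X R) = 1 := rfl

end Miller

open Miller in
theorem statement1_general (X : Type) (R : Finset (FreeGroup X))
    (u : FreeGroup X) :
    IsConj (qM X R * embX X R u) (qM X R) ↔ toG X R u = 1 := by
  refine ⟨fun h => ?_, fun h => isConj_mul_of_mem_conjShift
    (normalClosure_le_conjShift (PresentedGroup.mk_eq_one_iff.1 h))⟩
  simpa [killθq_embX, killθq_qM] using (killθq X R).map_isConj h

open Miller in
/-- Sapir. For every word `u` on `X^{±1}`, the elements `qu` and `q` are
conjugate in the Miller machine `M(G)` if and only if `u` represents the identity of `G`. -/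
theorem statement1 (X : Type) [Fintype X] (R : Finset (FreeGroup X)) (hR : R.Nonempty)
    (u : FreeGroup X) :
    IsConj (qM X R * embX X R u) (qM X R) ↔ toG X R u = 1 :=
  statement1_general X R u
end

section
/- The assignment θ_α ↦ φ_α extends to a group homomorphism from the free group F(Θ) to Aut(F(X ∪ {q})), and the Miller Machine M(G) is isomorphic to the semidirect product F(X ∪ {q}) ⋊ F(Θ) with respect to this action. In particular, the subgroups ⟨X, q⟩_{M(G)} and ⟨Θ⟩_{M(G)} of M(G) are free (on X ∪ {q} and on Θ respectively), and every element g of M(G) can be written uniquely as g = ατ with α ∈ ⟨X, q⟩_{M(G)} and τ ∈ ⟨Θ⟩_{M(G)}. -/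
namespace Miller

noncomputable section Aux

variable (X : Type) (R : Finset (FreeGroup X))

open FreeGroup

/-- inverse of `phi`. -/
def phiInv (a : ThIdx X R) : FreeGroup (Yt X) →* FreeGroup (Yt X) :=
  FreeGroup.lift fun s =>
    match s with
    | Sum.inl x => FreeGroup.of (Sum.inl x : Yt X)
    | Sum.inr _ =>
      match a with
      | Sum.inl x' =>
          FreeGroup.of (Sum.inl x' : Yt X) * qY X * (FreeGroup.of (Sum.inl x' : Yt X))⁻¹
      | Sum.inr r => qY X * (embY X r.1)⁻¹

lemma phi_ofl (a : ThIdx X R) (x : X) :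
    phi X R a (FreeGroup.of (Sum.inl x : Yt X)) = FreeGroup.of (Sum.inl x : Yt X) := by
  simp [phi]

lemma phiInv_ofl (a : ThIdx X R) (x : X) :
    phiInv X R a (FreeGroup.of (Sum.inl x : Yt X)) = FreeGroup.of (Sum.inl x : Yt X) := by
  simp [phiInv]

lemma phi_embY (a : ThIdx X R) (w : FreeGroup X) :
    phi X R a (embY X w) = embY X w := by
  have h : (phi X R a).comp (embY X) = embY X := by
    apply FreeGroup.ext_hom; intro x
    simp [embY, phi]
  exact DFunLike.congr_fun h w

lemma phiInv_embY (a : ThIdx X R) (w : FreeGroup X) :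
    phiInv X R a (embY X w) = embY X w := by
  have h : (phiInv X R a).comp (embY X) = embY X := by
    apply FreeGroup.ext_hom; intro x
    simp [embY, phiInv]
  exact DFunLike.congr_fun h w

lemma phi_q_inl (x' : X) :
    phi X R (Sum.inl x') (qY X) =
      (FreeGroup.of (Sum.inl x' : Yt X))⁻¹ * qY X * FreeGroup.of (Sum.inl x' : Yt X) :=
  FreeGroup.lift_apply_of

lemma phi_q_inr (r : {r : FreeGroup X // r ∈ R}) :
    phi X R (Sum.inr r) (qY X) = qY X * embY X r.1 :=
  FreeGroup.lift_apply_of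

lemma phiInv_q_inl (x' : X) :
    phiInv X R (Sum.inl x') (qY X) =
      FreeGroup.of (Sum.inl x' : Yt X) * qY X * (FreeGroup.of (Sum.inl x' : Yt X))⁻¹ :=
  FreeGroup.lift_apply_of

lemma phiInv_q_inr (r : {r : FreeGroup X // r ∈ R}) :
    phiInv X R (Sum.inr r) (qY X) = qY X * (embY X r.1)⁻¹ :=
  FreeGroup.lift_apply_of

lemma phiInv_comp_phi (a : ThIdx X R) :
    (phiInv X R a).comp (phi X R a) = MonoidHom.id _ := by
  apply FreeGroup.ext_hom; intro s
  simp only [MonoidHom.comp_apply, MonoidHom.id_apply]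
  rcases s with x | u
  · rw [phi_ofl, phiInv_ofl]
  · obtain ⟨⟩ := u
    show phiInv X R a (phi X R a (qY X)) = qY X
    rcases a with x' | r
    · rw [phi_q_inl, _root_.map_mul, _root_.map_mul, _root_.map_inv, phiInv_ofl, phiInv_q_inl]
      group
    · rw [phi_q_inr, _root_.map_mul, phiInv_embY, phiInv_q_inr]
      group

lemma phi_comp_phiInv (a : ThIdx X R) :
    (phi X R a).comp (phiInv X R a) = MonoidHom.id _ := by
  apply FreeGroup.ext_hom; intro s
  simp only [MonoidHom.comp_apply, MonoidHom.id_apply]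
  rcases s with x | u
  · rw [phiInv_ofl, phi_ofl]
  · obtain ⟨⟩ := u
    show phi X R a (phiInv X R a (qY X)) = qY X
    rcases a with x' | r
    · rw [phiInv_q_inl, _root_.map_mul, _root_.map_mul, _root_.map_inv, phi_ofl, phi_q_inl]
      group
    · rw [phiInv_q_inr, _root_.map_mul, _root_.map_inv, phi_embY, phi_q_inr]
      group

/-- `phi a` as an automorphism. -/
def phiE (a : ThIdx X R) : MulAut (FreeGroup (Yt X)) :=
  MonoidHom.toMulEquiv (phi X R a) (phiInv X R a) (phiInv_comp_phi X R a) (phi_comp_phiInv X R a)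

/-- the action of `F(Θ)`. -/
def act : FreeGroup (ThIdx X R) →* MulAut (FreeGroup (Yt X)) :=
  FreeGroup.lift (phiE X R)

@[simp] lemma act_of (a : ThIdx X R) : act X R (FreeGroup.of a) = phiE X R a :=
  FreeGroup.lift_apply_of

lemma coe_phiE (a : ThIdx X R) : ⇑(phiE X R a) = ⇑(phi X R a) := rfl

end Aux

end Miller

namespace Miller

noncomputable section Aux2

variable (X : Type) (R : Finset (FreeGroup X))

open SemidirectProduct

/-- The semidirect product. -/
abbrev SDP : Type :=
  SemidirectProduct (FreeGroup (Yt X)) (FreeGroup (ThIdx X R)) (act X R)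

/-- images of the generators of `M(G)` in the semidirect product. -/
def fgen : Gen X R → SDP X R := fun g =>
  match g with
  | Sum.inl x => SemidirectProduct.inl (FreeGroup.of (Sum.inl x : Yt X))
  | Sum.inr (Sum.inl a) => SemidirectProduct.inr (FreeGroup.of a)
  | Sum.inr (Sum.inr _) => SemidirectProduct.inl (qY X)

lemma conj_inl (a : ThIdx X R) (n : FreeGroup (Yt X)) :
    (SemidirectProduct.inr (FreeGroup.of a) : SDP X R) * SemidirectProduct.inl n *
      (SemidirectProduct.inr (FreeGroup.of a))⁻¹ = SemidirectProduct.inl (phi X R a n) := by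
  rw [← _root_.map_inv, ← SemidirectProduct.inl_aut, act_of]
  rfl

lemma lift_fgen_ofX (w : FreeGroup X) :
    FreeGroup.lift (fgen X R) (ofX X R w) =
      SemidirectProduct.inl (embY X w) := by
  have h : (FreeGroup.lift (fgen X R)).comp (ofX X R) =
      (SemidirectProduct.inl (φ := act X R)).comp (embY X) := by
    apply FreeGroup.ext_hom; intro x
    simp [ofX, embY, FreeGroup.map.of, fgen]
  exact DFunLike.congr_fun h w

lemma rels_mapped : ∀ r ∈ rels X R, FreeGroup.lift (fgen X R) r = 1 := by
  rintro w (⟨a, x, rfl⟩ | ⟨x, rfl⟩ | ⟨r, rfl⟩) <;>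
    rw [_root_.map_mul, _root_.map_inv, mul_inv_eq_one] <;>
    simp only [_root_.map_mul, θg, xg, qg, FreeGroup.lift_apply_of, lift_fgen_ofX, fgen]
  · have h := conj_inl X R a (FreeGroup.of (Sum.inl x : Yt X))
    rw [phi_ofl] at h
    exact mul_inv_eq_iff_eq_mul.mp h
  · have h := conj_inl X R (Sum.inl x) (FreeGroup.of (Sum.inl x : Yt X) * qY X)
    have hphi : phi X R (Sum.inl x) (FreeGroup.of (Sum.inl x : Yt X) * qY X) =
        qY X * FreeGroup.of (Sum.inl x : Yt X) := by
      rw [_root_.map_mul, phi_ofl, phi_q_inl]; group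
    rw [hphi] at h
    have h2 := mul_inv_eq_iff_eq_mul.mp h
    simpa [_root_.map_mul, mul_assoc] using h2
  · have h := conj_inl X R (Sum.inr r) (qY X)
    rw [phi_q_inr] at h
    have h2 := mul_inv_eq_iff_eq_mul.mp h
    simpa [_root_.map_mul, mul_assoc] using h2

/-- The homomorphism `M(G) →* SDP`. -/
def fwd : M X R →* SDP X R := PresentedGroup.toGroup (rels_mapped X R)

@[simp] lemma fwd_of (g : Gen X R) :
    fwd X R (PresentedGroup.of g) = fgen X R g := PresentedGroup.toGroup.of _

lemma toM_rel {w : FreeGroup (Gen X R)} (hw : w ∈ rels X R) : toM X R w = 1 :=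
  (QuotientGroup.eq_one_iff w).mpr (Subgroup.subset_normalClosure hw)

@[simp] lemma toMY_ofl (x : X) :
    toMY X R (FreeGroup.of (Sum.inl x : Yt X)) = xM X R x := by
  simp [toMY, xM, xg, FreeGroup.map.of]

@[simp] lemma toMY_q : toMY X R (qY X) = qM X R := by
  simp [toMY, qM, qg, qY, FreeGroup.map.of]

@[simp] lemma embTh_of (a : ThIdx X R) :
    embTh X R (FreeGroup.of a) = θM X R a := by
  simp [embTh, θM, θg, FreeGroup.map.of]

lemma toMY_embY (w : FreeGroup X) : toMY X R (embY X w) = embX X R w := by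
  have h : (toMY X R).comp (embY X) = embX X R := by
    apply FreeGroup.ext_hom; intro x
    simp [toMY, embY, embX, ofX, FreeGroup.map.of, xM, xg]
  exact DFunLike.congr_fun h w

lemma rel1M (a : ThIdx X R) (x : X) :
    θM X R a * xM X R x = xM X R x * θM X R a := by
  have h := toM_rel X R (Or.inl ⟨a, x, rfl⟩)
  rw [_root_.map_mul, _root_.map_mul, _root_.map_inv, _root_.map_mul,
    mul_inv_eq_one] at h
  exact h

lemma rel2M (x : X) :
    θM X R (Sum.inl x) * xM X R x * qM X R = qM X R * xM X R x * θM X R (Sum.inl x) := by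
  have h := toM_rel X R (Or.inr (Or.inl ⟨x, rfl⟩))
  rw [_root_.map_mul, _root_.map_mul, _root_.map_inv, _root_.map_mul, _root_.map_mul,
    mul_inv_eq_one] at h
  exact h

lemma rel3M (r : {r : FreeGroup X // r ∈ R}) :
    θM X R (Sum.inr r) * qM X R = qM X R * embX X R r.1 * θM X R (Sum.inr r) := by
  have h := toM_rel X R (Or.inr (Or.inr ⟨r, rfl⟩))
  rw [_root_.map_mul, _root_.map_inv, _root_.map_mul, _root_.map_mul,
    mul_inv_eq_one] at h
  exact h

lemma toMY_phi (a : ThIdx X R) (n : FreeGroup (Yt X)) :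
    toMY X R (phi X R a n) = θM X R a * toMY X R n * (θM X R a)⁻¹ := by
  have h : (toMY X R).comp (phi X R a) =
      ((MulAut.conj (θM X R a)).toMonoidHom).comp (toMY X R) := by
    apply FreeGroup.ext_hom; intro s
    simp only [MonoidHom.comp_apply, MulEquiv.coe_toMonoidHom, MulAut.conj_apply]
    rcases s with x | u
    · rw [phi_ofl, toMY_ofl, rel1M]; group
    · obtain ⟨⟩ := u
      have hq : (FreeGroup.of (Sum.inr () : Yt X)) = qY X := rfl
      rw [hq, toMY_q]
      rcases a with x' | r
      · rw [phi_q_inl, _root_.map_mul, _root_.map_mul, _root_.map_inv,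
          toMY_ofl, toMY_q]
        have key : xM X R x' * ((xM X R x')⁻¹ * qM X R * xM X R x') * θM X R (Sum.inl x') =
            xM X R x' * (θM X R (Sum.inl x') * qM X R * (θM X R (Sum.inl x'))⁻¹) *
              θM X R (Sum.inl x') := by
          calc xM X R x' * ((xM X R x')⁻¹ * qM X R * xM X R x') * θM X R (Sum.inl x')
              = qM X R * xM X R x' * θM X R (Sum.inl x') := by group
            _ = θM X R (Sum.inl x') * xM X R x' * qM X R := (rel2M X R x').symm
            _ = xM X R x' * θM X R (Sum.inl x') * qM X R := by rw [rel1M]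
            _ = xM X R x' * (θM X R (Sum.inl x') * qM X R * (θM X R (Sum.inl x'))⁻¹) *
                  θM X R (Sum.inl x') := by group
        have key2 : xM X R x' * (((xM X R x')⁻¹ * qM X R * xM X R x') * θM X R (Sum.inl x')) =
            xM X R x' * ((θM X R (Sum.inl x') * qM X R * (θM X R (Sum.inl x'))⁻¹) *
              θM X R (Sum.inl x')) := by
          rw [← mul_assoc, ← mul_assoc]; exact key
        exact mul_right_cancel (mul_left_cancel key2)
      · rw [phi_q_inr, _root_.map_mul, toMY_q, toMY_embY]
        rw [rel3M]; group
  simpa using DFunLike.congr_fun h n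

end Aux2

end Miller

namespace Miller

noncomputable section Aux3

variable (X : Type) (R : Finset (FreeGroup X))

lemma xM_eq (x : X) : xM X R x = PresentedGroup.of (Sum.inl x) := rfl
lemma qM_eq : qM X R = PresentedGroup.of (Sum.inr (Sum.inr ())) := rfl
lemma θM_eq (a : ThIdx X R) : θM X R a = PresentedGroup.of (Sum.inr (Sum.inl a)) := rfl

lemma act_conj (g : FreeGroup (ThIdx X R)) :
    ∀ n, toMY X R (act X R g n) = embTh X R g * toMY X R n * (embTh X R g)⁻¹ := by
  have hg : g ∈ Subgroup.closure
      (Set.range (FreeGroup.of : ThIdx X R → FreeGroup (ThIdx X R))) := by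
    rw [FreeGroup.closure_range_of]; exact Subgroup.mem_top g
  induction hg using Subgroup.closure_induction with
  | mem x hx =>
    obtain ⟨a, rfl⟩ := hx
    intro n
    rw [act_of, embTh_of]
    exact toMY_phi X R a n
  | one => intro n; simp
  | mul x y hx hy ihx ihy =>
    intro n
    rw [_root_.map_mul, _root_.map_mul, MulAut.mul_apply, ihx, ihy]
    group
  | inv x hx ihx =>
    intro n
    have hxx : act X R x (act X R x⁻¹ n) = n := by
      rw [_root_.map_inv, MulAut.inv_def]
      exact (act X R x).apply_symm_apply n
    have h := ihx (act X R x⁻¹ n)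
    rw [hxx] at h
    rw [show embTh X R x⁻¹ = (embTh X R x)⁻¹ from _root_.map_inv _ x, h]
    group

lemma hcond (g : FreeGroup (ThIdx X R)) :
    (toMY X R).comp ((act X R g).toMonoidHom) =
      (MulAut.conj (embTh X R g)).toMonoidHom.comp (toMY X R) :=
  MonoidHom.ext fun n => by simpa using act_conj X R g n

/-- The homomorphism `SDP →* M(G)`. -/
def bwd : SDP X R →* M X R :=
  SemidirectProduct.lift (toMY X R) (embTh X R) (hcond X R)

lemma bwd_inl (n : FreeGroup (Yt X)) :
    bwd X R (SemidirectProduct.inl n) = toMY X R n := SemidirectProduct.lift_inl _ _ _ _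

lemma bwd_inr (g : FreeGroup (ThIdx X R)) :
    bwd X R (SemidirectProduct.inr g) = embTh X R g := SemidirectProduct.lift_inr _ _ _ _

lemma bwd_comp_fwd : (bwd X R).comp (fwd X R) = MonoidHom.id (M X R) := by
  ext g
  rw [MonoidHom.comp_apply, fwd_of, MonoidHom.id_apply]
  rcases g with x | (a | u)
  · show bwd X R (SemidirectProduct.inl (FreeGroup.of (Sum.inl x : Yt X))) = _
    rw [bwd_inl, toMY_ofl, xM_eq]
  · show bwd X R (SemidirectProduct.inr (FreeGroup.of a)) = _
    rw [bwd_inr, embTh_of, θM_eq]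
  · obtain ⟨⟩ := u
    show bwd X R (SemidirectProduct.inl (qY X)) = _
    rw [bwd_inl, toMY_q, qM_eq]

lemma fwd_comp_toMY : (fwd X R).comp (toMY X R) = SemidirectProduct.inl := by
  apply FreeGroup.ext_hom; intro s
  rcases s with x | u
  · rw [MonoidHom.comp_apply, toMY_ofl, xM_eq, fwd_of]
    rfl
  · obtain ⟨⟩ := u
    rw [MonoidHom.comp_apply]
    show fwd X R (qM X R) = _
    rw [qM_eq, fwd_of]
    rfl

lemma fwd_comp_embTh : (fwd X R).comp (embTh X R) = SemidirectProduct.inr := by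
  apply FreeGroup.ext_hom; intro a
  rw [MonoidHom.comp_apply, embTh_of, θM_eq, fwd_of]
  rfl

lemma fwd_comp_bwd : (fwd X R).comp (bwd X R) = MonoidHom.id (SDP X R) := by
  apply SemidirectProduct.hom_ext
  · rw [MonoidHom.comp_assoc]
    have h : (bwd X R).comp SemidirectProduct.inl = toMY X R :=
      SemidirectProduct.lift_comp_inl _ _ _
    rw [h, fwd_comp_toMY, MonoidHom.id_comp]
  · rw [MonoidHom.comp_assoc]
    have h : (bwd X R).comp SemidirectProduct.inr = embTh X R :=
      SemidirectProduct.lift_comp_inr _ _ _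
    rw [h, fwd_comp_embTh, MonoidHom.id_comp]

/-- The isomorphism `M(G) ≃* SDP`. -/
def isoMS : M X R ≃* SDP X R :=
  MonoidHom.toMulEquiv (fwd X R) (bwd X R) (bwd_comp_fwd X R) (fwd_comp_bwd X R)

lemma toMY_inj : Function.Injective (toMY X R) := by
  intro a b h
  have h2 := congrArg (fwd X R) h
  rw [← MonoidHom.comp_apply, ← MonoidHom.comp_apply, fwd_comp_toMY] at h2
  exact SemidirectProduct.inl_injective h2

lemma embTh_inj : Function.Injective (embTh X R) := by
  intro a b h
  have h2 := congrArg (fwd X R) h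
  rw [← MonoidHom.comp_apply, ← MonoidHom.comp_apply, fwd_comp_embTh] at h2
  exact SemidirectProduct.inr_injective h2

lemma range_toMY : Set.range (toMY X R) = (XqSub X R : Set (M X R)) := by
  have h1 : (toMY X R).range =
      Subgroup.closure (Set.range (⇑(toMY X R) ∘ FreeGroup.of)) := by
    rw [MonoidHom.range_eq_map, ← FreeGroup.closure_range_of, MonoidHom.map_closure,
      Set.range_comp]
  have h2 : Set.range (⇑(toMY X R) ∘ FreeGroup.of) =
      Set.range (xM X R) ∪ {qM X R} := by
    ext m; constructor
    · rintro ⟨s, rfl⟩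
      rcases s with x | u
      · exact Or.inl ⟨x, (toMY_ofl X R x).symm⟩
      · obtain ⟨⟩ := u
        exact Or.inr (toMY_q X R).symm
    · rintro (⟨x, rfl⟩ | rfl)
      · exact ⟨Sum.inl x, toMY_ofl X R x⟩
      · exact ⟨Sum.inr (), toMY_q X R⟩
  rw [← MonoidHom.coe_range, h1, h2]
  rfl

lemma range_embTh : Set.range (embTh X R) = (ThSub X R : Set (M X R)) := by
  have h1 : (embTh X R).range =
      Subgroup.closure (Set.range (⇑(embTh X R) ∘ FreeGroup.of)) := by
    rw [MonoidHom.range_eq_map, ← FreeGroup.closure_range_of, MonoidHom.map_closure,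
      Set.range_comp]
  have h2 : Set.range (⇑(embTh X R) ∘ FreeGroup.of) = Set.range (θM X R) := by
    ext m; constructor
    · rintro ⟨a, rfl⟩
      exact ⟨a, (embTh_of X R a).symm⟩
    · rintro ⟨a, rfl⟩
      exact ⟨a, embTh_of X R a⟩
  rw [← MonoidHom.coe_range, h1, h2]
  rfl

lemma fwd_inj : Function.Injective (fwd X R) := by
  intro a b h
  have h2 := congrArg (bwd X R) h
  rwa [← MonoidHom.comp_apply, ← MonoidHom.comp_apply, bwd_comp_fwd,
    MonoidHom.id_apply, MonoidHom.id_apply] at h2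

lemma unique_decomp (g : M X R) :
    ∃! p : FreeGroup (Yt X) × FreeGroup (ThIdx X R),
      g = toMY X R p.1 * embTh X R p.2 := by
  refine ⟨((fwd X R g).left, (fwd X R g).right), ?_, ?_⟩
  · apply fwd_inj X R
    rw [_root_.map_mul, ← MonoidHom.comp_apply, fwd_comp_toMY,
      ← MonoidHom.comp_apply, fwd_comp_embTh]
    exact (SemidirectProduct.inl_left_mul_inr_right (fwd X R g)).symm
  · rintro ⟨n, τ⟩ hp
    have h : fwd X R g = SemidirectProduct.inl n * SemidirectProduct.inr τ := by
      rw [hp, _root_.map_mul, ← MonoidHom.comp_apply, fwd_comp_toMY,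
        ← MonoidHom.comp_apply, fwd_comp_embTh]
    have h1 : (fwd X R g).left = n := by rw [h]; simp
    have h2 : (fwd X R g).right = τ := by rw [h]; simp
    simp [h1, h2]

end Aux3

end Miller

open Miller in
/-- The assignment `θ_α ↦ φ_α` extends to a group homomorphism from the
free group `F(Θ)` to `Aut(F(X ∪ {q}))`, and the Miller machine `M(G)` is isomorphic to the
semidirect product `F(X ∪ {q}) ⋊ F(Θ)` with respect to this action. In particular, the
subgroups `⟨X, q⟩` and `⟨Θ⟩` of `M(G)` are free (on `X ∪ {q}` and on `Θ` respectively: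
the natural maps are injective with images those subgroups), and every element `g` of
`M(G)` can be written uniquely as `g = ατ` with `α ∈ ⟨X, q⟩` and `τ ∈ ⟨Θ⟩`. -/
theorem statement3 (X : Type) [Fintype X] (R : Finset (FreeGroup X)) (hR : R.Nonempty) :
    ∃ act : FreeGroup (ThIdx X R) →* MulAut (FreeGroup (Yt X)),
      (∀ a : ThIdx X R, ⇑(act (FreeGroup.of a)) = ⇑(phi X R a)) ∧
      Nonempty (M X R ≃* SemidirectProduct (FreeGroup (Yt X)) (FreeGroup (ThIdx X R)) act) ∧
      Function.Injective (toMY X R) ∧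
      Function.Injective (embTh X R) ∧
      Set.range (toMY X R) = (XqSub X R : Set (M X R)) ∧
      Set.range (embTh X R) = (ThSub X R : Set (M X R)) ∧
      (∀ g : M X R, ∃! p : FreeGroup (Yt X) × FreeGroup (ThIdx X R),
        g = toMY X R p.1 * embTh X R p.2) := by
  refine ⟨act X R, fun a => by rw [act_of]; rfl, ⟨isoMS X R⟩,
    toMY_inj X R, embTh_inj X R, range_toMY X R, range_embTh X R, unique_decomp X R⟩
end
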